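/- arXiv:2008.03846 — 3 statements merged into one kernel-verified Lean document; each statement's English description precedes it below -/
import Mathlib

section
/- If a nonzero real polynomial has at most 3 nonzero terms (monomials), then it has at most 2 positive real roots counted with multiplicity. -/
/-! By Descartes' rule of signs the positive roots, counted with multiplicity, are at most the
sign variations of the coefficient sequence, and `k` nonzero coefficients admit at most `k - 1`
sign variations. -/

open Polynomial

namespace Polynomial

variable {R : Type*} [Semiring R] [LinearOrder R]

theorem signVariations_le_card_support_sub_one (P : R[X]) :
    P.signVariations ≤ P.support.card - 1 := by
  induction h : P.support.card generalizing P with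
  | zero => simp [card_support_eq_zero.mp h]
  | succ n ih =>
    cases n with
    | zero =>
      obtain ⟨k, c, -, rfl⟩ := card_support_eq_one.mp h
      simp [C_mul_X_pow_eq_monomial, signVariations_monomial]
    | succ m =>
      calc P.signVariations ≤ P.eraseLead.signVariations + 1 := signVariations_le_eraseLead_succ P
        _ ≤ m + 1 := by grw [ih _ (card_support_eraseLead' h)]; omega

end Polynomial

theorem stmt_3_general (g : Polynomial ℝ) (hsupp : g.support.card ≤ 3) :
    Multiset.card (g.roots.filter fun z => 0 < z) ≤ 2 := by
  rw [← Multiset.countP_eq_card_filter]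
  calc g.roots.countP (0 < ·) ≤ g.signVariations := roots_countP_pos_le_signVariations g
    _ ≤ g.support.card - 1 := signVariations_le_card_support_sub_one g
    _ ≤ 2 := by omega

/-- A nonzero real polynomial with at most 3 nonzero terms has at most 2 positive real
roots counted with multiplicity. -/
theorem stmt_3 (g : Polynomial ℝ) (hg : g ≠ 0) (hsupp : g.support.card ≤ 3) :
    Multiset.card (g.roots.filter fun z => 0 < z) ≤ 2 :=
  stmt_3_general g hsupp
end

section
/- A power function and an affine function intersect in at most two points in the open first quadrant: if ℓ₁(x) = δ x^{-ξ} with δ > 0 and ξ : ℝ, and ℓ₂(x) = A x - B with A, B : ℝ, then the set {x > 0 : ℓ₁(x) = ℓ₂(x) and ℓ₂(x) > 0} has at most 2 elements, provided ξ ∉ {0, -1} or the functions are not identical. -/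
/-!
Write `p = -ξ`. For `p ∉ {0, 1}` the second derivative `p (p - 1) x ^ (p - 2)` of `x ↦ x ^ p`
has constant sign on `(0, ∞)`, so the power function is strictly convex or strictly concave there
and cannot meet a line in three points. For `p ∈ {0, 1}` both sides are affine, and two
intersection points already force them to coincide. Hence the intersection set contains no
increasing triple, so it has at most two elements.
-/

open Set

theorem Set.encard_le_two_of_forall_not_lt_lt {α : Type*} [LinearOrder α] {s : Set α}
    (h : ∀ x ∈ s, ∀ y ∈ s, ∀ z ∈ s, x < y → y < z → False) : s.encard ≤ 2 := by
  by_contra! hs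
  obtain ⟨t, hts, ht⟩ := exists_subset_encard_eq (Order.add_one_le_of_lt hs)
  obtain ⟨t, rfl⟩ := (finite_of_encard_eq_coe ht).exists_finset_coe
  have hcard : t.card = 3 := by exact_mod_cast ht
  set e := t.orderEmbOfFin hcard
  have he (i : Fin 3) : e i ∈ s := hts (t.orderEmbOfFin_mem hcard i)
  exact h _ (he 0) _ (he 1) _ (he 2) (e.strictMono (by decide)) (e.strictMono (by decide))

theorem StrictConvexOn.lt_of_eq_affine {s : Set ℝ} {f : ℝ → ℝ} (hf : StrictConvexOn ℝ s f)
    {c d x y z : ℝ} (hx : x ∈ s) (hz : z ∈ s) (hxy : x < y) (hyz : y < z)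
    (hfx : f x = c * x + d) (hfz : f z = c * z + d) : f y < c * y + d := by
  have hy : y ∈ openSegment ℝ x z := by rw [openSegment_eq_Ioo (hxy.trans hyz)]; exact ⟨hxy, hyz⟩
  obtain ⟨a, b, ha, hb, hab, rfl⟩ := hy
  calc f (a • x + b • z) < a • f x + b • f z := hf.2 hx hz (hxy.trans hyz).ne ha hb hab
    _ = c * (a • x + b • z) + d := by
      simp only [smul_eq_mul, hfx, hfz]; linear_combination d * hab

theorem StrictConcaveOn.lt_of_eq_affine {s : Set ℝ} {f : ℝ → ℝ} (hf : StrictConcaveOn ℝ s f)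
    {c d x y z : ℝ} (hx : x ∈ s) (hz : z ∈ s) (hxy : x < y) (hyz : y < z)
    (hfx : f x = c * x + d) (hfz : f z = c * z + d) : c * y + d < f y := by
  have := hf.neg.lt_of_eq_affine (c := -c) (d := -d) hx hz hxy hyz
    (by simp [hfx]; ring) (by simp [hfz]; ring)
  simp only [Pi.neg_apply] at this
  linarith

theorem Real.iter_deriv_two_rpow_const (p x : ℝ) :
    deriv^[2] (fun y : ℝ => y ^ p) x = p * (p - 1) * x ^ (p - 2) := by
  simp [Real.iter_deriv_rpow_const, descPochhammer_succ_right]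

theorem Real.strictConvexOn_rpow_Ioi {p : ℝ} (hp : 0 < p * (p - 1)) :
    StrictConvexOn ℝ (Ioi 0) fun x : ℝ => x ^ p := by
  refine strictConvexOn_of_deriv2_pos' (convex_Ioi 0)
    (fun x hx => (Real.continuousAt_rpow_const x p (.inl (ne_of_gt hx))).continuousWithinAt)
    fun x hx => ?_
  rw [Real.iter_deriv_two_rpow_const]
  exact mul_pos hp (Real.rpow_pos_of_pos hx _)

theorem Real.strictConcaveOn_rpow_Ioi {p : ℝ} (hp : p * (p - 1) < 0) :
    StrictConcaveOn ℝ (Ioi 0) fun x : ℝ => x ^ p := by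
  refine strictConcaveOn_of_deriv2_neg' (convex_Ioi 0)
    (fun x hx => (Real.continuousAt_rpow_const x p (.inl (ne_of_gt hx))).continuousWithinAt)
    fun x hx => ?_
  rw [Real.iter_deriv_two_rpow_const]
  exact mul_neg_of_neg_of_pos hp (Real.rpow_pos_of_pos hx _)

theorem Real.eq_zero_or_eq_one_of_rpow_eq_affine {p c d x y z : ℝ} (hx : 0 < x) (hxy : x < y)
    (hyz : y < z) (hfx : x ^ p = c * x + d) (hfy : y ^ p = c * y + d) (hfz : z ^ p = c * z + d) :
    p = 0 ∨ p = 1 := by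
  have hz : z ∈ Ioi (0 : ℝ) := hx.trans (hxy.trans hyz)
  by_contra! hp
  rcases (mul_ne_zero hp.1 (sub_ne_zero.2 hp.2)).lt_or_gt with hneg | hpos
  · exact (Real.strictConcaveOn_rpow_Ioi hneg).lt_of_eq_affine hx hz hxy hyz hfx hfz |>.ne' hfy
  · exact (Real.strictConvexOn_rpow_Ioi hpos).lt_of_eq_affine hx hz hxy hyz hfx hfz |>.ne hfy

theorem eq_and_eq_of_affine_eq_affine {a b c d x z : ℝ} (hxz : x ≠ z)
    (hx : a * x + b = c * x + d) (hz : a * z + b = c * z + d) : a = c ∧ b = d := by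
  have hac : a = c := by
    have : (a - c) * (x - z) = 0 := by linear_combination hx - hz
    simpa [sub_eq_zero, hxz] using this
  exact ⟨hac, by subst hac; linarith⟩

/-- A power function `ℓ₁(x) = δ x^(-ξ)` (with `δ > 0`) and an affine function
`ℓ₂(x) = A x - B`, not identical on `(0, ∞)`, intersect in at most two points of the
open first quadrant. -/
theorem stmt_7 (δ ξ A B : ℝ) (hδ : 0 < δ)
    (hne : ¬ ∀ x : ℝ, 0 < x → δ * x ^ (-ξ) = A * x - B) :
    ({x : ℝ | 0 < x ∧ δ * x ^ (-ξ) = A * x - B ∧ 0 < A * x - B}).Finite ∧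
    ({x : ℝ | 0 < x ∧ δ * x ^ (-ξ) = A * x - B ∧ 0 < A * x - B}).ncard ≤ 2 := by
  refine encard_le_coe_iff_finite_ncard_le.1 (encard_le_two_of_forall_not_lt_lt ?_)
  rintro x ⟨hx, hfx, -⟩ y ⟨-, hfy, -⟩ z ⟨-, hfz, -⟩ hxy hyz
  have hdiv {w : ℝ} (hw : δ * w ^ (-ξ) = A * w - B) : w ^ (-ξ) = A / δ * w + -B / δ := by
    field_simp [hδ.ne']; linarith
  obtain ⟨c, d, hcd⟩ : ∃ c d : ℝ, ∀ w : ℝ, 0 < w → δ * w ^ (-ξ) = c * w + d := by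
    rcases Real.eq_zero_or_eq_one_of_rpow_eq_affine hx hxy hyz (hdiv hfx) (hdiv hfy) (hdiv hfz)
      with h | h
    · exact ⟨0, δ, fun w _ => by simp [h]⟩
    · exact ⟨δ, 0, fun w _ => by simp [h]⟩
  have hpt {w : ℝ} (hw : 0 < w) (hfw : δ * w ^ (-ξ) = A * w - B) : c * w + d = A * w + -B := by
    rw [← hcd w hw, hfw, sub_eq_add_neg]
  obtain ⟨rfl, rfl⟩ := eq_and_eq_of_affine_eq_affine (hxy.trans hyz).ne (hpt hx hfx)
    (hpt (hx.trans (hxy.trans hyz)) hfz)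
  exact hne fun w hw => by rw [hcd w hw, sub_eq_add_neg]
end

section
/- Let g(x) = -(κ₁ - λκ₃)x³ - 2c₁κ₁ x² - (c₁²κ₁ - κ₂)x + c₁κ₂ with κ₁, κ₂, κ₃ > 0, λ > 0 and c₁ : ℝ. Then the coefficient sequence of g has at most 2 sign changes; consequently g has at most 2 positive real roots counted with multiplicity. -/
open Polynomial

/-- The list of coefficients `a_0, ..., a_n` of a polynomial (up to its degree). -/
noncomputable def coeffList (g : Polynomial ℝ) : List ℝ :=
  (List.range (g.natDegree + 1)).map fun i => g.coeff i

/-- The number of sign changes in the sequence of nonzero coefficients of `g`. -/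
noncomputable def signChanges (g : Polynomial ℝ) : ℕ :=
  let l := (_root_.coeffList g).filter fun a => a ≠ 0
  (l.zip l.tail).countP fun p => p.1 * p.2 < 0

/-!
The constant and quadratic coefficients `a₀ = c₁κ₂` and `a₂ = -2c₁κ₁` satisfy
`a₀a₂ = -2c₁²κ₁κ₂ ≤ 0`. Three sign changes in `a₀, a₁, a₂, a₃` would need all four coefficients
nonzero with `a₀a₁ < 0` and `a₁a₂ < 0`, hence `a₀a₂ > 0`; so there are at most two.

The root bound is then Descartes' rule of signs, `Polynomial.roots_countP_pos_le_signVariations`,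
once `signChanges` is identified with Mathlib's `Polynomial.signVariations`. The latter reads the
coefficients from the leading one down and counts the runs of equal signs, minus one.
-/

theorem List.zip_tail_eq_dropLast_zip_tail {α : Type*} (l : List α) :
    l.zip l.tail = l.dropLast.zip l.tail := by
  induction l with
  | nil => rfl
  | cons a t ih => cases t with
    | nil => rfl
    | cons b u => simp_all

theorem mul_neg_iff_sign_ne {R : Type*} [Ring R] [LinearOrder R] [IsStrictOrderedRing R] {a b : R}
    (ha : a ≠ 0) (hb : b ≠ 0) : a * b < 0 ↔ SignType.sign a ≠ SignType.sign b := by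
  rcases ha.lt_or_gt with ha | ha <;> rcases hb.lt_or_gt with hb | hb <;>
    simp [sign_neg, sign_pos, ha, hb, mul_neg_iff, ha.le.not_gt, hb.le.not_gt]

noncomputable def adjacentSignChanges (l : List ℝ) : ℕ :=
  (l.zip l.tail).countP fun p => p.1 * p.2 < 0

theorem signChanges_eq_adjacentSignChanges (g : ℝ[X]) :
    signChanges g = adjacentSignChanges ((_root_.coeffList g).filter (· ≠ 0)) :=
  rfl

theorem adjacentSignChanges_cons_cons (a b : ℝ) (l : List ℝ) :
    adjacentSignChanges (a :: b :: l) =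
      adjacentSignChanges (b :: l) + if a * b < 0 then 1 else 0 := by
  simp [adjacentSignChanges, List.countP_cons]

theorem adjacentSignChanges_le_length_sub_one (l : List ℝ) :
    adjacentSignChanges l ≤ l.length - 1 :=
  List.countP_le_length.trans (by simp)

theorem adjacentSignChanges_reverse (l : List ℝ) :
    adjacentSignChanges l.reverse = adjacentSignChanges l := by
  rw [adjacentSignChanges, adjacentSignChanges, List.zip_tail_eq_dropLast_zip_tail,
    List.zip_tail_eq_dropLast_zip_tail l, List.tail_reverse, List.dropLast_reverse,
    ← List.zip_swap, List.countP_map, List.zip, ← List.reverse_zipWith (by simp),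
    List.countP_reverse]
  simp [Function.comp_def, mul_comm]

theorem length_destutter'_map_sign (a : ℝ) (l : List ℝ) (hl : ∀ x ∈ a :: l, x ≠ 0) :
    ((l.map SignType.sign).destutter' (· ≠ ·) (SignType.sign a)).length =
      adjacentSignChanges (a :: l) + 1 := by
  induction l generalizing a with
  | nil => simp [adjacentSignChanges]
  | cons b l ih =>
    have hab := mul_neg_iff_sign_ne (hl a (by simp)) (hl b (by simp))
    have ihb := ih b fun x hx => hl x (List.mem_cons_of_mem a hx)
    rw [adjacentSignChanges_cons_cons, List.map_cons, List.destutter'_cons]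
    by_cases h : SignType.sign a = SignType.sign b <;> simp [h, hab, ← ihb]

theorem length_destutter_map_sign_sub_one (l : List ℝ) (hl : ∀ x ∈ l, x ≠ 0) :
    ((l.map SignType.sign).destutter (· ≠ ·)).length - 1 = adjacentSignChanges l := by
  cases l with
  | nil => rfl
  | cons a l => simp [List.destutter_cons', length_destutter'_map_sign a l hl]

theorem filter_coeffList_eq_reverse (g : ℝ[X]) :
    g.coeffList.filter (· ≠ 0) = ((_root_.coeffList g).filter (· ≠ 0)).reverse := by
  by_cases hg : g = 0
  · simp [hg, _root_.coeffList]
  · simp [Polynomial.coeffList, _root_.coeffList, withBotSucc_degree_eq_natDegree_add_one hg,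
      List.filter_reverse]

theorem signChanges_eq_signVariations (g : ℝ[X]) : signChanges g = g.signVariations := by
  rw [signVariations, List.filter_map, Function.comp_def]
  simp only [ne_eq, sign_eq_zero_iff]
  rw [filter_coeffList_eq_reverse, length_destutter_map_sign_sub_one _ (by simp),
    adjacentSignChanges_reverse, signChanges_eq_adjacentSignChanges]

theorem signChanges_le_natDegree (g : ℝ[X]) : signChanges g ≤ g.natDegree := by
  rw [signChanges_eq_adjacentSignChanges]
  refine (adjacentSignChanges_le_length_sub_one _).trans ?_
  have hlen : (_root_.coeffList g).length = g.natDegree + 1 := by simp [_root_.coeffList]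
  have := List.length_filter_le (· ≠ 0) (_root_.coeffList g)
  omega

theorem adjacentSignChanges_filter_le_two (a₀ a₁ a₂ a₃ : ℝ) (h : a₀ * a₂ ≤ 0) :
    adjacentSignChanges ([a₀, a₁, a₂, a₃].filter (· ≠ 0)) ≤ 2 := by
  by_cases hz : ∀ x ∈ [a₀, a₁, a₂, a₃], x ≠ 0
  · have hpair : ¬ (a₀ * a₁ < 0 ∧ a₁ * a₂ < 0) := fun ⟨h₁, h₂⟩ => by
      nlinarith [mul_pos_of_neg_of_neg h₁ h₂, sq_nonneg a₁]
    have hmid : ((if a₁ * a₂ < 0 then 1 else 0) + if a₀ * a₁ < 0 then 1 else 0) ≤ 1 := by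
      split_ifs <;> simp_all
    have hlast : (if a₂ * a₃ < 0 then 1 else 0) ≤ 1 := by split_ifs <;> simp
    rw [List.filter_eq_self.2 (by simpa using hz)]
    simp only [adjacentSignChanges_cons_cons, show adjacentSignChanges [a₃] = 0 from rfl]
    omega
  · have hshort : ([a₀, a₁, a₂, a₃].filter (· ≠ 0)).length < 4 :=
      List.length_filter_lt_length_iff_exists.2 (by push Not at hz; simpa using hz)
    have := adjacentSignChanges_le_length_sub_one ([a₀, a₁, a₂, a₃].filter (· ≠ 0))
    omega

theorem signChanges_le_two_of_coeff_zero_mul_coeff_two_nonpos {g : ℝ[X]}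
    (hdeg : g.natDegree ≤ 3) (h : g.coeff 0 * g.coeff 2 ≤ 0) : signChanges g ≤ 2 := by
  rcases hdeg.lt_or_eq with hlt | h3
  · exact (signChanges_le_natDegree g).trans (by omega)
  · have hlist : _root_.coeffList g = [g.coeff 0, g.coeff 1, g.coeff 2, g.coeff 3] := by
      simp [_root_.coeffList, h3, List.range_succ]
    rw [signChanges_eq_adjacentSignChanges, hlist]
    exact adjacentSignChanges_filter_le_two _ _ _ _ h

theorem stmt_10_general (κ₁ κ₂ κ₃ lam c₁ : ℝ) (hκ₁ : 0 < κ₁) (hκ₂ : 0 < κ₂)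
    (g : Polynomial ℝ)
    (hg : g = C (-(κ₁ - lam * κ₃)) * X ^ 3 + C (-(2 * c₁ * κ₁)) * X ^ 2
        + C (-(c₁ ^ 2 * κ₁ - κ₂)) * X + C (c₁ * κ₂)) :
    signChanges g ≤ 2 ∧ Multiset.card (g.roots.filter fun z => 0 < z) ≤ 2 := by
  have hdeg : g.natDegree ≤ 3 := by rw [hg]; compute_degree
  have h₀ : g.coeff 0 = c₁ * κ₂ := by
    rw [hg]; simp only [coeff_add, coeff_C_mul, coeff_X_pow, coeff_C, coeff_X]; norm_num
  have h₂ : g.coeff 2 = -(2 * c₁ * κ₁) := by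
    rw [hg]; simp only [coeff_add, coeff_C_mul, coeff_X_pow, coeff_C, coeff_X]; norm_num
  have hsign : signChanges g ≤ 2 := by
    refine signChanges_le_two_of_coeff_zero_mul_coeff_two_nonpos hdeg ?_
    rw [h₀, h₂]
    nlinarith [mul_nonneg (sq_nonneg c₁) (mul_pos hκ₁ hκ₂).le]
  refine ⟨hsign, ?_⟩
  rw [← Multiset.countP_eq_card_filter]
  calc g.roots.countP (0 < ·) ≤ g.signVariations := roots_countP_pos_le_signVariations g
    _ = signChanges g := (signChanges_eq_signVariations g).symm
    _ ≤ 2 := hsign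

/-- The cubic `g(x) = -(κ₁ - λκ₃)x³ - 2c₁κ₁ x² - (c₁²κ₁ - κ₂)x + c₁κ₂` with
`κ₁, κ₂, κ₃, λ > 0` has at most 2 sign changes in its coefficient sequence, hence at most
2 positive real roots counted with multiplicity. -/
theorem stmt_10 (κ₁ κ₂ κ₃ lam c₁ : ℝ) (hκ₁ : 0 < κ₁) (hκ₂ : 0 < κ₂) (hκ₃ : 0 < κ₃)
    (hlam : 0 < lam)
    (g : Polynomial ℝ)
    (hg : g = C (-(κ₁ - lam * κ₃)) * X ^ 3 + C (-(2 * c₁ * κ₁)) * X ^ 2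
        + C (-(c₁ ^ 2 * κ₁ - κ₂)) * X + C (c₁ * κ₂)) :
    signChanges g ≤ 2 ∧ Multiset.card (g.roots.filter fun z => 0 < z) ≤ 2 :=
  stmt_10_general κ₁ κ₂ κ₃ lam c₁ hκ₁ hκ₂ g hg
end
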